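/- arXiv:2404.18554 — 2 statements merged into one kernel-verified Lean document; each statement's English description precedes it below -/
import Mathlib

section
/- For every t ∈ R the following two identities hold in the Clifford algebra Cℓ of the rank-8 split hyperbolic form: (1 + t·v₁v₃)·(1 − v₄v₃*)·(1 − t·v₁v₃)·(1 + v₄v₃*) = 1 + t·v₁v₄, and (1 + t·v₁v₄)·(1 + v₄*v₂*)·(1 − t·v₁v₄)·(1 − v₄*v₂*) = 1 + t·v₁v₂*. Equivalently, in terms of the Chevalley generators X_{e_i ± e_j}(t) of Spin₈ ⊂ Cℓ and the group commutator (A, B) = A·B·A⁻¹·B⁻¹, one has ((X_{e₁+e₃}(t), X_{−e₃+e₄}(−1)), X_{−e₂−e₄}(1)) = X_{e₁−e₂}(t). -/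
/-! Chevalley generator commutator identities in the Clifford algebra of the split
hyperbolic quadratic form of rank 8 (`n = 4`):
`((X_{e₁+e₃}(t), X_{−e₃+e₄}(−1)), X_{−e₂−e₄}(1)) = X_{e₁−e₂}(t)`.
Indices are 0-based: `v 0 = v₁, …, v 3 = v₄`. -/

/-- The hyperbolic quadratic form `q (x, g) = g x` on `V × Module.Dual R V`. -/
noncomputable def hypQ (R : Type*) [CommRing R] (V : Type*) [AddCommGroup V] [Module R V] :
    QuadraticForm R (V × Module.Dual R V) :=
  (QuadraticForm.dualProd R V).comp (LinearEquiv.prodComm R V (Module.Dual R V)).toLinearMap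

/-- `v i` is the image in the Clifford algebra of the `i`-th standard basis vector. -/
noncomputable def v (R : Type*) [CommRing R] (i : Fin 4) :
    CliffordAlgebra (hypQ R (Fin 4 → R)) :=
  CliffordAlgebra.ι (hypQ R (Fin 4 → R)) (Pi.single i 1, 0)

/-- `vs i` is the image in the Clifford algebra of the `i`-th dual basis vector. -/
noncomputable def vs (R : Type*) [CommRing R] (i : Fin 4) :
    CliffordAlgebra (hypQ R (Fin 4 → R)) :=
  CliffordAlgebra.ι (hypQ R (Fin 4 → R)) (0, LinearMap.proj i)

section Abstract
variable {A : Type*} [Ring A]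

/-- Abstract commutator lemma: `(1+a)(1−b)(1−a)(1+b) = 1+c` when `a² = b² = 0`,
`ba = ab + c`, `ac = 0`, `cb = 0`. -/
theorem aux_comm1 (a b c : A) (ha2 : a*a = 0) (hb2 : b*b = 0)
    (hba : b*a = a*b + c) (hac : a*c = 0) (hcb : c*b = 0) :
    (1+a)*(1-b)*(1-a)*(1+b) = 1 + c := by
  have ha2' : ∀ x : A, a*(a*x) = 0 := fun x => by rw [← mul_assoc, ha2, zero_mul]
  have hb2' : ∀ x : A, b*(b*x) = 0 := fun x => by rw [← mul_assoc, hb2, zero_mul]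
  have hac' : ∀ x : A, a*(c*x) = 0 := fun x => by rw [← mul_assoc, hac, zero_mul]
  have hcb' : ∀ x : A, c*(b*x) = 0 := fun x => by rw [← mul_assoc, hcb, zero_mul]
  have hba' : ∀ x : A, b*(a*x) = a*(b*x) + c*x := fun x => by
    rw [← mul_assoc, hba, add_mul, mul_assoc]
  simp only [mul_add, add_mul, mul_sub, sub_mul, mul_one, one_mul, mul_assoc,
    hba, hba', ha2, ha2', hb2, hb2', hac, hac', hcb, hcb',
    mul_zero, zero_mul, add_zero, zero_add, sub_zero]
  abel

/-- Abstract commutator lemma: `(1+a)(1+b)(1−a)(1−b) = 1+d` when `a² = b² = 0`,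
`ba = ab − d`, `ad = 0`, `db = 0`. -/
theorem aux_comm2 (a b d : A) (ha2 : a*a = 0) (hb2 : b*b = 0)
    (hba : b*a = a*b - d) (had : a*d = 0) (hdb : d*b = 0) :
    (1+a)*(1+b)*(1-a)*(1-b) = 1 + d := by
  have ha2' : ∀ x : A, a*(a*x) = 0 := fun x => by rw [← mul_assoc, ha2, zero_mul]
  have hb2' : ∀ x : A, b*(b*x) = 0 := fun x => by rw [← mul_assoc, hb2, zero_mul]
  have had' : ∀ x : A, a*(d*x) = 0 := fun x => by rw [← mul_assoc, had, zero_mul]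
  have hdb' : ∀ x : A, d*(b*x) = 0 := fun x => by rw [← mul_assoc, hdb, zero_mul]
  have hba' : ∀ x : A, b*(a*x) = a*(b*x) - d*x := fun x => by
    rw [← mul_assoc, hba, sub_mul, mul_assoc]
  simp only [mul_add, add_mul, mul_sub, sub_mul, mul_one, one_mul, mul_assoc,
    hba, hba', ha2, ha2', hb2, hb2', had, had', hdb, hdb',
    mul_zero, zero_mul, add_zero, zero_add, sub_zero]
  abel

theorem aux_sq (x y : A) (hx : x*x = 0) (hyx : y*x = -(x*y)) : (x*y)*(x*y) = 0 := by
  calc (x*y)*(x*y) = x*(y*x)*y := by noncomm_ring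
    _ = x*(-(x*y))*y := by rw [hyx]
    _ = -((x*x)*(y*y)) := by noncomm_ring
    _ = 0 := by rw [hx]; simp

theorem aux_zero1 (x y w : A) (hx : x*x = 0) (hyx : y*x = -(x*y)) : (x*y)*(x*w) = 0 := by
  calc (x*y)*(x*w) = x*(y*x)*w := by noncomm_ring
    _ = x*(-(x*y))*w := by rw [hyx]
    _ = -((x*x)*(y*w)) := by noncomm_ring
    _ = 0 := by rw [hx]; simp

theorem aux_zero2 (x y w : A) (hy : y*y = 0) : (x*y)*(y*w) = 0 := by
  calc (x*y)*(y*w) = x*((y*y)*w) := by noncomm_ring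
    _ = 0 := by rw [hy]; simp

theorem aux_zero3 (x y z : A) (hy : y*y = 0) (hyz : y*z = -(z*y)) : (x*y)*(z*y) = 0 := by
  calc (x*y)*(z*y) = x*(y*z)*y := by noncomm_ring
    _ = x*(-(z*y))*y := by rw [hyz]
    _ = -((x*z)*(y*y)) := by noncomm_ring
    _ = 0 := by rw [hy]; simp

theorem aux_swap1 (x y z w : A) (hyz : y*z = -(z*y)) (hxz : x*z = -(z*x))
    (hyw : y*w = 1 - w*y) (hxw : x*w = -(w*x)) :
    (x*y)*(z*w) = (z*w)*(x*y) + z*x := by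
  calc (x*y)*(z*w) = x*(y*z)*w := by noncomm_ring
    _ = x*(-(z*y))*w := by rw [hyz]
    _ = -((x*z)*(y*w)) := by noncomm_ring
    _ = -((-(z*x))*(y*w)) := by rw [hxz]
    _ = (z*x)*(y*w) := by noncomm_ring
    _ = (z*x)*(1 - w*y) := by rw [hyw]
    _ = z*x - z*((x*w)*y) := by noncomm_ring
    _ = z*x - z*((-(w*x))*y) := by rw [hxw]
    _ = (z*w)*(x*y) + z*x := by noncomm_ring

theorem aux_swap2 (x y z w : A) (hyz : y*z = -(z*y)) (hxz : x*z = -(z*x))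
    (hyw : y*w = -(w*y)) (hxw : x*w = 1 - w*x) :
    (x*y)*(z*w) = (z*w)*(x*y) - z*y := by
  calc (x*y)*(z*w) = x*(y*z)*w := by noncomm_ring
    _ = x*(-(z*y))*w := by rw [hyz]
    _ = -((x*z)*(y*w)) := by noncomm_ring
    _ = -((-(z*x))*(y*w)) := by rw [hxz]
    _ = (z*x)*(y*w) := by noncomm_ring
    _ = (z*x)*(-(w*y)) := by rw [hyw]
    _ = -(z*((x*w)*y)) := by noncomm_ring
    _ = -(z*((1 - w*x)*y)) := by rw [hxw]
    _ = (z*w)*(x*y) - z*y := by noncomm_ring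

end Abstract

section Relations
variable {R : Type*} [CommRing R]

theorem hypQ_apply (x : Fin 4 → R) (g : Module.Dual R (Fin 4 → R)) :
    hypQ R (Fin 4 → R) (x, g) = g x := by
  simp [hypQ, QuadraticForm.dualProd_apply]

theorem vsq (i : Fin 4) : v R i * v R i = 0 := by
  rw [v, CliffordAlgebra.ι_sq_scalar, hypQ_apply]
  simp

theorem ssq (i : Fin 4) : vs R i * vs R i = 0 := by
  rw [vs, CliffordAlgebra.ι_sq_scalar, hypQ_apply]
  simp

theorem vv (i j : Fin 4) : v R j * v R i = -(v R i * v R j) := by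
  have h := CliffordAlgebra.ι_mul_ι_add_swap (Q := hypQ R (Fin 4 → R))
    (Pi.single i 1, 0) (Pi.single j 1, 0)
  rw [QuadraticMap.polar] at h
  simp only [Prod.mk_add_mk, add_zero, hypQ_apply, LinearMap.zero_apply, sub_self,
    sub_zero, map_zero] at h
  unfold v
  linear_combination (norm := noncomm_ring) h

theorem ss (i j : Fin 4) : vs R j * vs R i = -(vs R i * vs R j) := by
  have h := CliffordAlgebra.ι_mul_ι_add_swap (Q := hypQ R (Fin 4 → R))
    (0, LinearMap.proj i) (0, LinearMap.proj j)
  rw [QuadraticMap.polar] at h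
  simp only [Prod.mk_add_mk, add_zero, zero_add, hypQ_apply, LinearMap.add_apply,
    LinearMap.proj_apply, Pi.zero_apply, map_zero, sub_self, sub_zero] at h
  unfold vs
  linear_combination (norm := noncomm_ring) h

theorem sv (i j : Fin 4) : vs R j * v R i =
    algebraMap R _ (if j = i then 1 else 0) - v R i * vs R j := by
  have h := CliffordAlgebra.ι_mul_ι_add_swap (Q := hypQ R (Fin 4 → R))
    (Pi.single i 1, 0) (0, LinearMap.proj j)
  rw [QuadraticMap.polar] at h
  simp only [Prod.mk_add_mk, add_zero, zero_add, hypQ_apply, LinearMap.add_apply,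
    LinearMap.proj_apply, LinearMap.zero_apply, Pi.zero_apply, Pi.single_apply,
    map_zero, sub_zero, zero_sub, zero_add, add_zero] at h
  unfold v vs
  exact eq_sub_of_add_eq' h

theorem sv_ne (i j : Fin 4) (h : j ≠ i) : vs R j * v R i = -(v R i * vs R j) := by
  rw [sv, if_neg h, map_zero, zero_sub]

theorem sv_eq (i : Fin 4) : vs R i * v R i = 1 - v R i * vs R i := by
  rw [sv, if_pos rfl, map_one]

end Relations

/-- `(1 + t·v₁v₃)·(1 − v₄v₃*)·(1 − t·v₁v₃)·(1 + v₄v₃*) = 1 + t·v₁v₄` and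
`(1 + t·v₁v₄)·(1 + v₄*v₂*)·(1 − t·v₁v₄)·(1 − v₄*v₂*) = 1 + t·v₁v₂*`; i.e.
`((X_{e₁+e₃}(t), X_{−e₃+e₄}(−1)), X_{−e₂−e₄}(1)) = X_{e₁−e₂}(t)` in `Spin₈ ⊂ Cℓ`. -/
theorem spin8_commutator_X_e1_sub_e2 {R : Type*} [CommRing R] (t : R) :
    (1 + t • (v R 0 * v R 2)) * (1 - v R 3 * vs R 2) *
        (1 - t • (v R 0 * v R 2)) * (1 + v R 3 * vs R 2) =
      1 + t • (v R 0 * v R 3) ∧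
    (1 + t • (v R 0 * v R 3)) * (1 + vs R 3 * vs R 1) *
        (1 - t • (v R 0 * v R 3)) * (1 - vs R 3 * vs R 1) =
      1 + t • (v R 0 * vs R 1) := by
  constructor
  · -- a = v₀v₂, b = v₃v₂*, c = v₀v₃
    set a := v R 0 * v R 2
    set b := v R 3 * vs R 2
    set c := v R 0 * v R 3
    have ha2 : a * a = 0 := aux_sq _ _ (vsq 0) (vv 0 2)
    have hb2 : b * b = 0 := aux_sq _ _ (vsq 3) (sv_ne 3 2 (by decide))
    have hba : b * a = a * b + c :=
      aux_swap1 (v R 3) (vs R 2) (v R 0) (v R 2)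
        (sv_ne 0 2 (by decide)) (vv 0 3) (sv_eq 2) (vv 2 3)
    have hac : a * c = 0 := aux_zero1 _ _ _ (vsq 0) (vv 0 2)
    have hcb : c * b = 0 := aux_zero2 _ _ _ (vsq 3)
    have ha2' : (t • a) * (t • a) = 0 := by
      rw [smul_mul_smul_comm, ha2, smul_zero]
    have hba' : b * (t • a) = (t • a) * b + t • c := by
      rw [mul_smul_comm, hba, smul_add, smul_mul_assoc]
    have hac' : (t • a) * (t • c) = 0 := by
      rw [smul_mul_smul_comm, hac, smul_zero]
    have hcb' : (t • c) * b = 0 := by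
      rw [smul_mul_assoc, hcb, smul_zero]
    exact aux_comm1 (t • a) b (t • c) ha2' hb2 hba' hac' hcb'
  · -- a = v₀v₃, b = v₃*v₁*, d = v₀v₁*
    set a := v R 0 * v R 3
    set b := vs R 3 * vs R 1
    set d := v R 0 * vs R 1
    have ha2 : a * a = 0 := aux_sq _ _ (vsq 0) (vv 0 3)
    have hb2 : b * b = 0 := aux_sq _ _ (ssq 3) (ss 3 1)
    have hba : b * a = a * b - d :=
      aux_swap2 (vs R 3) (vs R 1) (v R 0) (v R 3)
        (sv_ne 0 1 (by decide)) (sv_ne 0 3 (by decide))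
        (sv_ne 3 1 (by decide)) (sv_eq 3)
    have had : a * d = 0 := aux_zero1 _ _ _ (vsq 0) (vv 0 3)
    have hdb : d * b = 0 := aux_zero3 _ _ _ (ssq 1) (ss 3 1)
    have ha2' : (t • a) * (t • a) = 0 := by
      rw [smul_mul_smul_comm, ha2, smul_zero]
    have hba' : b * (t • a) = (t • a) * b - t • d := by
      rw [mul_smul_comm, hba, smul_sub, smul_mul_assoc]
    have had' : (t • a) * (t • d) = 0 := by
      rw [smul_mul_smul_comm, had, smul_zero]
    have hdb' : (t • d) * b = 0 := by
      rw [smul_mul_assoc, hdb, smul_zero]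
    exact aux_comm2 (t • a) b (t • d) ha2' hb2 hba' had' hdb'
end

section
/- Define the R-linear map φ : M → M by φ(e₁, 0) = (0, −e₁*), φ(0, e₁*) = (−e₁, 0), and φ(e_i, 0) = (e_i, 0), φ(0, e_i*) = (0, e_i*) for i = 2, 3, 4 (extended linearly). Then: (a) φ ∘ φ = id and φ is an isometry of q, i.e. q(φ(m)) = q(m) for all m ∈ M; (b) the induced algebra automorphism Cℓ(φ) = CliffordAlgebra.map of the isometry φ satisfies, for every t ∈ R: Cℓ(φ)(1 + t·v₁v₃*) = 1 + t·v₃*v₁*, Cℓ(φ)(1 + t·v₃*v₁*) = 1 + t·v₁v₃*, Cℓ(φ)(1 + t·v₂v₄) = 1 + t·v₂v₄, and Cℓ(φ)(1 + t·v₃v₄*) = 1 + t·v₃v₄*. (In Chevalley-generator notation, Cℓ(φ) swaps X_{e₁−e₃}(t) and X_{−e₁−e₃}(t) while fixing X_{e₂+e₄}(t) and X_{e₃−e₄}(t), so Cℓ(φ) restricted to Spin₈ is the outer automorphism θ.) -/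
/-- Let `φ` be the `R`-linear endomorphism of `M = V × V*` with `φ(e₁,0) = (0,−e₁*)`,
`φ(0,e₁*) = (−e₁,0)`, fixing `(e_i,0)` and `(0,e_i*)` for `i = 2,3,4`.  Then `φ ∘ φ = id`,
`φ` is an isometry of `q`, and the induced algebra automorphism `Cℓ(φ)` swaps
`X_{e₁−e₃}(t) = 1 + t·v₁v₃*` and `X_{−e₁−e₃}(t) = 1 + t·v₃*v₁*` while fixing
`X_{e₂+e₄}(t) = 1 + t·v₂v₄` and `X_{e₃−e₄}(t) = 1 + t·v₃v₄*`. -/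
theorem clifford_improper_isometry_theta {R : Type*} [CommRing R]
    (φ : ((Fin 4 → R) × Module.Dual R (Fin 4 → R)) →ₗ[R]
      ((Fin 4 → R) × Module.Dual R (Fin 4 → R)))
    (h1 : φ (Pi.single 0 1, 0) = (0, -LinearMap.proj 0))
    (h2 : φ (0, LinearMap.proj 0) = (-Pi.single 0 1, 0))
    (h3 : ∀ i : Fin 4, i ≠ 0 → φ (Pi.single i 1, 0) = (Pi.single i 1, 0))
    (h4 : ∀ i : Fin 4, i ≠ 0 → φ (0, LinearMap.proj i) = (0, LinearMap.proj i)) :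
    (∀ m, φ (φ m) = m) ∧
    (∀ m, hypQ R (Fin 4 → R) (φ m) = hypQ R (Fin 4 → R) m) ∧
    (∀ φᵢ : QuadraticMap.Isometry (hypQ R (Fin 4 → R)) (hypQ R (Fin 4 → R)),
      (∀ m, φᵢ m = φ m) →
      ∀ t : R,
        CliffordAlgebra.map φᵢ (1 + t • (v R 0 * vs R 2)) = 1 + t • (vs R 2 * vs R 0) ∧
        CliffordAlgebra.map φᵢ (1 + t • (vs R 2 * vs R 0)) = 1 + t • (v R 0 * vs R 2) ∧
        CliffordAlgebra.map φᵢ (1 + t • (v R 1 * v R 3)) = 1 + t • (v R 1 * v R 3) ∧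
        CliffordAlgebra.map φᵢ (1 + t • (v R 2 * vs R 3)) = 1 + t • (v R 2 * vs R 3)) := by
  have hq : ∀ m : (Fin 4 → R) × Module.Dual R (Fin 4 → R),
      hypQ R (Fin 4 → R) m = m.2 m.1 := by
    intro m; simp [hypQ]
  have hφ : ∀ m, φ m = m - (m.1 0 + m.2 (Pi.single 0 1)) •
      ((Pi.single 0 1 : Fin 4 → R), (LinearMap.proj 0 : Module.Dual R (Fin 4 → R))) := by
    rintro ⟨x, g⟩
    have key : (x, g) = (∑ i : Fin 4, x i •
          ((Pi.single i 1 : Fin 4 → R), (0 : Module.Dual R (Fin 4 → R))))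
        + (∑ i : Fin 4, g (Pi.single i 1) •
          ((0 : Fin 4 → R), (LinearMap.proj i : Module.Dual R (Fin 4 → R)))) := by
      have hx : x = ∑ i : Fin 4, x i • (Pi.single i 1 : Fin 4 → R) := by
        funext j; simp [Finset.sum_apply, Pi.single_apply]
      have hg : g = ∑ i : Fin 4, g (Pi.single i 1) •
          (LinearMap.proj i : Module.Dual R (Fin 4 → R)) := by
        ext y; simp [LinearMap.sum_apply, Pi.single_apply]
      rw [Prod.ext_iff]
      constructor
      · simp only [Prod.fst_add, Prod.fst_sum, Prod.smul_mk, smul_zero, Finset.sum_const_zero,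
          add_zero]
        exact hx
      · simp only [Prod.snd_add, Prod.snd_sum, Prod.smul_mk, smul_zero, Finset.sum_const_zero,
          zero_add]
        exact hg
    conv_lhs => rw [key]
    rw [map_add, map_sum, map_sum]
    simp only [map_smul, Fin.sum_univ_four, h1, h2, h3 1 (by decide), h3 2 (by decide),
      h3 3 (by decide), h4 1 (by decide), h4 2 (by decide), h4 3 (by decide)]
    conv_rhs => rw [key]
    have e1 : ((0 : Fin 4 → R), -(LinearMap.proj 0 : Module.Dual R (Fin 4 → R)))
        = -((0 : Fin 4 → R), (LinearMap.proj 0 : Module.Dual R (Fin 4 → R))) := by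
      simp [Prod.ext_iff]
    have e2 : (-(Pi.single 0 1 : Fin 4 → R), (0 : Module.Dual R (Fin 4 → R)))
        = -((Pi.single 0 1 : Fin 4 → R), (0 : Module.Dual R (Fin 4 → R))) := by
      simp [Prod.ext_iff]
    have e3 : ((Pi.single 0 1 : Fin 4 → R), (LinearMap.proj 0 : Module.Dual R (Fin 4 → R)))
        = ((Pi.single 0 1 : Fin 4 → R), (0 : Module.Dual R (Fin 4 → R)))
          + ((0 : Fin 4 → R), (LinearMap.proj 0 : Module.Dual R (Fin 4 → R))) := by
      simp [Prod.ext_iff]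
    simp only [Fin.sum_univ_four]
    rw [e1, e2, e3]
    module
  refine ⟨?_, ?_, ?_⟩
  · intro m
    rw [hφ, hφ]
    simp only [Prod.fst_sub, Prod.snd_sub, Prod.smul_fst, Prod.smul_snd, Pi.sub_apply,
      Pi.smul_apply, Pi.single_eq_same, smul_eq_mul, mul_one, LinearMap.sub_apply,
      LinearMap.smul_apply, LinearMap.proj_apply]
    module
  · intro m
    rw [hφ, hq, hq]
    simp only [Prod.fst_sub, Prod.snd_sub, Prod.smul_mk, Pi.sub_apply, Pi.smul_apply,
      Pi.single_eq_same, smul_eq_mul, mul_one, LinearMap.sub_apply, LinearMap.smul_apply,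
      LinearMap.proj_apply, map_sub, map_smul]
    ring
  · intro φᵢ hφᵢ t
    have mι : ∀ m, CliffordAlgebra.map φᵢ (CliffordAlgebra.ι (hypQ R (Fin 4 → R)) m)
        = CliffordAlgebra.ι (hypQ R (Fin 4 → R)) (φ m) := by
      intro m; rw [CliffordAlgebra.map_apply_ι, hφᵢ]
    have hv0 : CliffordAlgebra.map φᵢ (v R 0) = - vs R 0 := by
      rw [v, mι, h1, show ((0 : Fin 4 → R), -(LinearMap.proj 0 : Module.Dual R (Fin 4 → R)))
        = -((0 : Fin 4 → R), LinearMap.proj 0) from by simp [Prod.ext_iff], map_neg, vs]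
    have hvs0 : CliffordAlgebra.map φᵢ (vs R 0) = - v R 0 := by
      rw [vs, mι, h2, show (-(Pi.single 0 1 : Fin 4 → R), (0 : Module.Dual R (Fin 4 → R)))
        = -((Pi.single 0 1 : Fin 4 → R), 0) from by simp [Prod.ext_iff], map_neg, v]
    have hvi : ∀ i : Fin 4, i ≠ 0 → CliffordAlgebra.map φᵢ (v R i) = v R i := by
      intro i hi; rw [v, mι, h3 i hi, ← v]
    have hvsi : ∀ i : Fin 4, i ≠ 0 → CliffordAlgebra.map φᵢ (vs R i) = vs R i := by
      intro i hi; rw [vs, mι, h4 i hi, ← vs]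
    have anti : ∀ a b : (Fin 4 → R) × Module.Dual R (Fin 4 → R),
        a.2 b.1 + b.2 a.1 = 0 →
        CliffordAlgebra.ι (hypQ R (Fin 4 → R)) a * CliffordAlgebra.ι (hypQ R (Fin 4 → R)) b
          = - (CliffordAlgebra.ι (hypQ R (Fin 4 → R)) b
              * CliffordAlgebra.ι (hypQ R (Fin 4 → R)) a) := by
      intro a b hab
      have hpol : QuadraticMap.polar (⇑(hypQ R (Fin 4 → R))) a b = a.2 b.1 + b.2 a.1 := by
        simp only [QuadraticMap.polar, hq, Prod.fst_add, Prod.snd_add, map_add, LinearMap.add_apply]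
        ring
      have h := CliffordAlgebra.ι_mul_ι_add_swap (Q := hypQ R (Fin 4 → R)) a b
      rw [hpol, hab, map_zero] at h
      exact eq_neg_of_add_eq_zero_left h
    have c1 : vs R 0 * vs R 2 = -(vs R 2 * vs R 0) := by
      rw [vs, vs]; exact anti _ _ (by simp)
    have c2 : vs R 2 * v R 0 = -(v R 0 * vs R 2) := by
      rw [vs, v]; exact anti _ _ (by simp [Pi.single_apply])
    refine ⟨?_, ?_, ?_, ?_⟩ <;>
      simp [map_add, map_smul, map_mul, hv0, hvs0, hvi 1 (by decide), hvi 2 (by decide),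
        hvi 3 (by decide), hvsi 2 (by decide), hvsi 3 (by decide), c1, c2, neg_mul, mul_neg]
end
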